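/- Let U : X → (0,∞) be measurable and let (u_n) be the Fortet scheme. Then: (a) the sequence (u_n) is pointwise non-increasing, satisfies 0 < U(x)/n ≤ u_n(x) ≤ U(x) < ∞ for all n ≥ 1 and x ∈ X, and its pointwise limit u_* exists with 0 ≤ u_* ≤ U; (b) the sequence (Φ[u_n]) is pointwise non-increasing with Φ[u_{n+1}] ≤ Φ[u_n] ≤ Φ[U]; (c) if moreover Φ[U](x) < ∞ for μ-almost every x, then for every n ≥ 1, Φ[u_n] < ∞ μ-almost everywhere, lim_{n→∞} Φ[u_n](x) = Φ[u_*](x) for μ-almost every x, and u_* = min(Φ[u_*], U) ≤ Φ[u_*] ≤ Φ[U] < ∞ μ-almost everywhere. -/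

import Mathlib

open MeasureTheory ENNReal Filter Topology

noncomputable section

/-- `Ψ[u](y) = ∫_X p(x',y) u(x')⁻¹ dμ(x')`. -/
def fortetPsi {X Y : Type*} [MeasurableSpace X]
    (p : X → Y → ℝ≥0∞) (μ : Measure X) (u : X → ℝ≥0∞) (y : Y) : ℝ≥0∞ :=
  ∫⁻ x, p x y * (u x)⁻¹ ∂μ

/-- The Fortet mapping `Φ[u](x) = ∫_Y p(x,y) Ψ[u](y)⁻¹ dν(y)`. -/
def fortetPhi {X Y : Type*} [MeasurableSpace X] [MeasurableSpace Y]
    (p : X → Y → ℝ≥0∞) (μ : Measure X) (ν : Measure Y) (u : X → ℝ≥0∞) (x : X) : ℝ≥0∞ :=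
  ∫⁻ y, p x y * (fortetPsi p μ u y)⁻¹ ∂ν

/-- The Fortet scheme: `fortetSeq p μ ν U n` is `u_{n+1}`, i.e. `u₁ = U` and
`u_{n+1} = max (U/(n+1)) (min (Φ[u_n]) U)`. -/
def fortetSeq {X Y : Type*} [MeasurableSpace X] [MeasurableSpace Y]
    (p : X → Y → ℝ≥0∞) (μ : Measure X) (ν : Measure Y) (U : X → ℝ≥0∞) :
    ℕ → X → ℝ≥0∞
  | 0 => U
  | n + 1 => fun x =>
      max (U x / (n + 2)) (min (fortetPhi p μ ν (fortetSeq p μ ν U n) x) (U x))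

/-!
The scheme decreases: `Ψ` reverses the pointwise order, so `Φ` preserves it, and the cut-offs
`U/(n+1)` decrease. Monotone convergence gives `Ψ[u_n] ↑ Ψ[u_*]`, hence `Φ[u_n] ↓ Φ[u_*]` by
decreasing convergence wherever `Φ[U] = Φ[u_1]` is finite. Letting `n → ∞` in the recursion,
where `U/(n+1) → 0`, yields `u_* = min (Φ[u_*]) U`.
-/

/-- The limit `u_*` of the Fortet scheme. -/
def fortetLimit {X Y : Type*} [MeasurableSpace X] [MeasurableSpace Y]
    (p : X → Y → ℝ≥0∞) (μ : Measure X) (ν : Measure Y) (U : X → ℝ≥0∞) : X → ℝ≥0∞ :=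
  ⨅ n, fortetSeq p μ ν U n

theorem ENNReal.tendsto_const_div_add_two_nat {c : ℝ≥0∞} (hc : c ≠ ∞) :
    Tendsto (fun n : ℕ => c / ((n : ℝ≥0∞) + 2)) atTop (𝓝 0) := by
  have h := (ENNReal.Tendsto.const_div tendsto_nat_nhds_top (Or.inr hc)).comp
    (tendsto_add_atTop_nat 2)
  simpa only [Function.comp_def, Nat.cast_add, Nat.cast_ofNat, div_top] using h

theorem ENNReal.eq_min_of_tendsto_max_div {a b : ℕ → ℝ≥0∞} {α β c : ℝ≥0∞} (hc : c ≠ ∞)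
    (ha : Tendsto a atTop (𝓝 α)) (hb : Tendsto b atTop (𝓝 β))
    (hrec : ∀ n, a (n + 1) = max (c / (n + 2)) (min (b n) c)) :
    α = min β c := by
  have hrhs : Tendsto (fun n => a (n + 1)) atTop (𝓝 (max 0 (min β c))) := by
    simp only [hrec]
    exact (ENNReal.tendsto_const_div_add_two_nat hc).max (hb.min tendsto_const_nhds)
  simpa using tendsto_nhds_unique (ha.comp (tendsto_add_atTop_nat 1)) hrhs

section FortetOperators

variable {X Y : Type*} [MeasurableSpace X] {p : X → Y → ℝ≥0∞} {μ : Measure X}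

theorem fortetPsi_anti : Antitone (fortetPsi (Y := Y) p μ) := fun _ _ h _ =>
  lintegral_mono fun x => mul_le_mul_right (ENNReal.inv_le_inv.mpr (h x)) _

theorem iSup_fortetPsi_of_antitone (hp : ∀ y, Measurable (p · y))
    {u : ℕ → X → ℝ≥0∞} (hu : ∀ n, Measurable (u n)) (hanti : Antitone u) (y : Y) :
    ⨆ n, fortetPsi p μ (u n) y = fortetPsi p μ (⨅ n, u n) y := by
  have hmeas : ∀ n, Measurable fun x => p x y * (u n x)⁻¹ := fun n =>
    (hp y).mul (hu n).inv
  have hmono : Monotone fun n x => p x y * (u n x)⁻¹ := fun _ _ hnm x =>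
    mul_le_mul_right (ENNReal.inv_le_inv.mpr (hanti hnm x)) _
  simp only [fortetPsi, ← lintegral_iSup hmeas hmono, iInf_apply, ENNReal.inv_iInf,
    ENNReal.mul_iSup]

variable [MeasurableSpace Y] {ν : Measure Y}

theorem measurable_fortetPsi [SFinite μ] (hp : Measurable (Function.uncurry p))
    {u : X → ℝ≥0∞} (hu : Measurable u) : Measurable (fortetPsi p μ u) :=
  (hp.mul (hu.comp measurable_fst).inv).lintegral_prod_left

theorem fortetPhi_mono : Monotone (fortetPhi p μ ν) := fun _ _ h _ =>
  lintegral_mono fun y => mul_le_mul_right (ENNReal.inv_le_inv.mpr (fortetPsi_anti h y)) _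

theorem measurable_fortetPhi [SFinite μ] [SFinite ν] (hp : Measurable (Function.uncurry p))
    {u : X → ℝ≥0∞} (hu : Measurable u) : Measurable (fortetPhi p μ ν u) :=
  (hp.mul ((measurable_fortetPsi hp hu).comp measurable_snd).inv).lintegral_prod_right

/-- Monotone convergence inside `Ψ`, then decreasing convergence in `Φ`, which needs the
finiteness of `Φ[u 0](x)`; `hpx` rules out `∞ * 0` when the infimum is pulled out of
`p x y * ·`. -/
theorem tendsto_fortetPhi_of_antitone [SFinite μ] (hp : Measurable (Function.uncurry p))
    {x : X} (hpx : ∀ y, p x y ≠ ∞) {u : ℕ → X → ℝ≥0∞} (hu : ∀ n, Measurable (u n))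
    (hanti : Antitone u) (hx : fortetPhi p μ ν (u 0) x ≠ ∞) :
    Tendsto (fun n => fortetPhi p μ ν (u n) x) atTop (𝓝 (fortetPhi p μ ν (⨅ n, u n) x)) := by
  have hmeas : ∀ n, Measurable fun y => p x y * (fortetPsi p μ (u n) y)⁻¹ := fun n =>
    hp.of_uncurry_left.mul (measurable_fortetPsi hp (hu n)).inv
  have hanti' : Antitone fun n y => p x y * (fortetPsi p μ (u n) y)⁻¹ := fun _ _ hnm y =>
    mul_le_mul_right (ENNReal.inv_le_inv.mpr (fortetPsi_anti (hanti hnm) y)) _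
  have hinf : ⨅ n, fortetPhi p μ ν (u n) x = fortetPhi p μ ν (⨅ n, u n) x := by
    calc ⨅ n, fortetPhi p μ ν (u n) x
        = ∫⁻ y, ⨅ n, p x y * (fortetPsi p μ (u n) y)⁻¹ ∂ν := (lintegral_iInf hmeas hanti' hx).symm
      _ = fortetPhi p μ ν (⨅ n, u n) x := lintegral_congr fun y => by
        rw [← ENNReal.mul_iInf fun h => (hpx y h).elim, ← ENNReal.inv_iSup,
          iSup_fortetPsi_of_antitone (fun _ => hp.of_uncurry_right) hu hanti]
  exact hinf ▸ tendsto_atTop_iInf fun _ _ hnm => fortetPhi_mono (hanti hnm) x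

end FortetOperators

section FortetScheme

variable {X Y : Type*} [MeasurableSpace X] [MeasurableSpace Y]
  {p : X → Y → ℝ≥0∞} {μ : Measure X} {ν : Measure Y} {U : X → ℝ≥0∞}

theorem fortetSeq_succ_apply (n : ℕ) (x : X) :
    fortetSeq p μ ν U (n + 1) x =
      max (U x / (n + 2)) (min (fortetPhi p μ ν (fortetSeq p μ ν U n) x) (U x)) :=
  rfl

theorem fortetSeq_le (n : ℕ) : fortetSeq p μ ν U n ≤ U := by
  intro x
  cases n with
  | zero => exact le_rfl
  | succ n =>
    refine max_le ?_ (min_le_right _ _)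
    exact ENNReal.div_le_of_le_mul (le_mul_of_one_le_right' (le_add_left one_le_two))

theorem div_le_fortetSeq (n : ℕ) (x : X) : U x / (n + 1) ≤ fortetSeq p μ ν U n x := by
  cases n with
  | zero => simp [fortetSeq]
  | succ n =>
    rw [fortetSeq_succ_apply, Nat.cast_add_one, add_assoc, one_add_one_eq_two]
    exact le_max_left _ _

theorem antitone_fortetSeq : Antitone (fortetSeq p μ ν U) := by
  refine antitone_nat_of_succ_le fun n => ?_
  induction n with
  | zero => exact fortetSeq_le 1
  | succ n ih =>
    intro x
    rw [fortetSeq_succ_apply (n + 1), fortetSeq_succ_apply n]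
    gcongr ?_ ⊔ (min ?_ _)
    · exact ENNReal.div_le_div_left (by gcongr; simp) _
    · exact fortetPhi_mono ih x

theorem measurable_fortetSeq [SFinite μ] [SFinite ν] (hp : Measurable (Function.uncurry p))
    (hU : Measurable U) (n : ℕ) : Measurable (fortetSeq p μ ν U n) := by
  induction n with
  | zero => exact hU
  | succ n ih => exact (hU.div_const _).max ((measurable_fortetPhi hp ih).min hU)

theorem fortetLimit_le : fortetLimit p μ ν U ≤ U :=
  (iInf_le _ 0).trans (fortetSeq_le 0)

theorem tendsto_fortetSeq_fortetLimit (x : X) :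
    Tendsto (fortetSeq p μ ν U · x) atTop (𝓝 (fortetLimit p μ ν U x)) := by
  rw [fortetLimit, iInf_apply]
  exact tendsto_atTop_iInf fun _ _ hnm => antitone_fortetSeq hnm x

theorem fortetLimit_eq_min {x : X} (hUx : U x ≠ ∞)
    (hΦ : Tendsto (fun n => fortetPhi p μ ν (fortetSeq p μ ν U n) x) atTop
      (𝓝 (fortetPhi p μ ν (fortetLimit p μ ν U) x))) :
    fortetLimit p μ ν U x = min (fortetPhi p μ ν (fortetLimit p μ ν U) x) (U x) :=
  ENNReal.eq_min_of_tendsto_max_div hUx (tendsto_fortetSeq_fortetLimit x) hΦ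
    fun n => fortetSeq_succ_apply n x

end FortetScheme

theorem fortet_scheme_convergence
    {X Y : Type*} [MeasurableSpace X] [MeasurableSpace Y]
    (μ : Measure X) (ν : Measure Y)
    [IsProbabilityMeasure μ] [IsProbabilityMeasure ν]
    (p : X → Y → ℝ≥0∞)
    (hp_meas : Measurable (Function.uncurry p))
    (hp_fin : ∀ x y, p x y ≠ ∞)
    (U : X → ℝ≥0∞) (hU_meas : Measurable U)
    (hU_pos : ∀ x, 0 < U x) (hU_fin : ∀ x, U x ≠ ∞) :
    -- (a) the scheme is pointwise non-increasing and pinched between U/n and U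
    (∀ n x, fortetSeq p μ ν U (n + 1) x ≤ fortetSeq p μ ν U n x) ∧
    (∀ (n : ℕ) (x : X), 0 < U x / (n + 1) ∧ U x / (n + 1) ≤ fortetSeq p μ ν U n x ∧
      fortetSeq p μ ν U n x ≤ U x ∧ U x < ∞) ∧
    ∃ ustar : X → ℝ≥0∞,
      (∀ x, Tendsto (fun n => fortetSeq p μ ν U n x) atTop (𝓝 (ustar x))) ∧
      (∀ x, ustar x ≤ U x) ∧
      -- (b) (Φ[u_n]) is pointwise non-increasing, bounded above by Φ[U]
      (∀ n x, fortetPhi p μ ν (fortetSeq p μ ν U (n + 1)) x ≤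
          fortetPhi p μ ν (fortetSeq p μ ν U n) x ∧
        fortetPhi p μ ν (fortetSeq p μ ν U n) x ≤ fortetPhi p μ ν U x) ∧
      -- (c) under the additional assumption Φ[U] < ∞ μ-a.e.
      ((∀ᵐ x ∂μ, fortetPhi p μ ν U x < ∞) →
        (∀ n, ∀ᵐ x ∂μ, fortetPhi p μ ν (fortetSeq p μ ν U n) x < ∞) ∧
        (∀ᵐ x ∂μ, Tendsto (fun n => fortetPhi p μ ν (fortetSeq p μ ν U n) x) atTop
          (𝓝 (fortetPhi p μ ν ustar x))) ∧
        (∀ᵐ x ∂μ, ustar x = min (fortetPhi p μ ν ustar x) (U x) ∧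
          fortetPhi p μ ν ustar x ≤ fortetPhi p μ ν U x ∧
          fortetPhi p μ ν U x < ∞)) := by
  have hΦ_anti : ∀ n, fortetPhi p μ ν (fortetSeq p μ ν U (n + 1)) ≤
      fortetPhi p μ ν (fortetSeq p μ ν U n) := fun n =>
    fortetPhi_mono (antitone_fortetSeq n.le_succ)
  have hΦ_le : ∀ n, fortetPhi p μ ν (fortetSeq p μ ν U n) ≤ fortetPhi p μ ν U := fun n =>
    fortetPhi_mono (fortetSeq_le n)
  refine ⟨fun n => antitone_fortetSeq n.le_succ, fun n x =>
      ⟨ENNReal.div_pos (hU_pos x).ne' (by simp), div_le_fortetSeq n x, fortetSeq_le n x,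
        (hU_fin x).lt_top⟩,
    fortetLimit p μ ν U, tendsto_fortetSeq_fortetLimit, fortetLimit_le,
    fun n x => ⟨hΦ_anti n x, hΦ_le n x⟩, fun hΦU => ?_⟩
  have hΦ_tendsto : ∀ᵐ x ∂μ, Tendsto (fun n => fortetPhi p μ ν (fortetSeq p μ ν U n) x) atTop
      (𝓝 (fortetPhi p μ ν (fortetLimit p μ ν U) x)) :=
    hΦU.mono fun x hx => tendsto_fortetPhi_of_antitone hp_meas (hp_fin x)
      (measurable_fortetSeq hp_meas hU_meas) antitone_fortetSeq hx.ne
  refine ⟨fun n => hΦU.mono fun x hx => (hΦ_le n x).trans_lt hx, hΦ_tendsto, ?_⟩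
  filter_upwards [hΦU, hΦ_tendsto] with x hx hx_tendsto
  exact ⟨fortetLimit_eq_min (hU_fin x) hx_tendsto, fortetPhi_mono fortetLimit_le x, hx⟩

end
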